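/- Operational formula for classical subentropy: let p = (p_1, …, p_n) ∈ Δ_n be a probability vector. For t ∈ Δ_n define the cyclic stochastic matrix Λ_t with entries (Λ_t)_{ji} = t_{(j−i) mod n}. Then Σ_{i=1}^n p_i ∫_{Δ_n} Σ_{j=1}^n t_{(j−i) mod n} · ln( t_{(j−i) mod n} / ( Σ_{k=1}^n t_{(j−k) mod n} p_k ) ) dt = F(p), i.e. the average over the uniformly distributed cyclic stochastic maps of the mean Kullback–Leibler divergence Σ_i p_i D(Λ_t(δ_i) ‖ Λ_t(p)) equals the subentropy F(p). -/

import Mathlib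

open MeasureTheory Matrix
open scoped ComplexOrder

/-- η(y) = −y ln y (with ln 0 = 0 in Mathlib, so 0 ln 0 = 0). -/
noncomputable def eta (y : ℝ) : ℝ := -(y * Real.log y)

/-- C_n = 1/2 + 1/3 + ⋯ + 1/n (C_1 = 0). -/
noncomputable def harmC (n : ℕ) : ℝ := ∑ k ∈ Finset.Icc 2 n, (1 : ℝ) / k

/-- Integral of a function over the probability simplex Δ_n with respect to the
normalized uniform measure dx = (n−1)! dx_1 ⋯ dx_{n−1}, realised in the coordinates
(x_1, …, x_{n−1}), with x_n = 1 − (x_1 + ⋯ + x_{n−1}). -/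
noncomputable def simplexIntegral (n : ℕ) (f : (Fin n → ℝ) → ℝ) : ℝ :=
  ((n - 1).factorial : ℝ) *
    ∫ y in {y : Fin (n - 1) → ℝ | (∀ i, 0 ≤ y i) ∧ ∑ i, y i ≤ 1},
      f (fun i => if h : (i : ℕ) < n - 1 then y ⟨(i : ℕ), h⟩ else 1 - ∑ j, y j)

/-- Subentropy of a probability vector: F(λ) = n ∫_{Δ_n} η(λ·x) dx − C_n. -/
noncomputable def subF (n : ℕ) (lam : Fin n → ℝ) : ℝ :=
  (n : ℝ) * simplexIntegral n (fun x => eta (∑ i, lam i * x i)) - harmC n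

/-- Subentropy of a (Hermitian) matrix: Q(ρ) = F(λ(ρ)), the subentropy of its
eigenvalue vector (junk value 0 for non-Hermitian matrices). -/
noncomputable def Qmat {ι : Type} [Fintype ι] [DecidableEq ι] (ρ : Matrix ι ι ℂ) : ℝ :=
  if h : ρ.IsHermitian then
    subF (Fintype.card ι) (fun k => h.eigenvalues ((Fintype.equivFin ι).symm k))
  else 0

/-!
Since `p_i t_{j-i} ≤ (Λ_t p)_j`, each divergence term splits as
`p_i t_{j-i} ln t_{j-i} - p_i t_{j-i} ln (Λ_t p)_j`, so the integrand averaged over `i` is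
`∑_j t_j ln t_j - ∑_j (Λ_t p)_j ln (Λ_t p)_j`. The uniform measure on `Δ_{m+1}` is invariant
under permutations of the coordinates: in the chart `y ↦ (y, 1 - ∑ y)` by the corner simplex
`{y ∈ ℝ^m | y ≥ 0, ∑ y ≤ 1}`, a permutation acts by an affine map of finite order, hence of
determinant `±1`. So `(Λ_t p)_j = ∑_k p_k t_{j-k}` integrates like `p · t`, which gives the term
`n ∫ η(p · x)`, and every `t_j ln t_j` integrates like the last coordinate. That integral is
`-C_n / n` by the layer formula
`∫_{y ≥ 0, ∑ y ≤ a} (a - ∑ y) ln (a - ∑ y) dy = a^{m+1} / (m+1)! (ln a - C_{m+1})`,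
proved by induction on `m` by slicing off one coordinate.
-/

open Finset Real
open scoped Nat

theorem AffineMap.measurePreserving_of_pow_eq_one {ι : Type*} [Fintype ι]
    (f : (ι → ℝ) →ᵃ[ℝ] (ι → ℝ)) {k : ℕ} (hk : k ≠ 0) (hf : f ^ k = 1) :
    MeasurePreserving f volume volume := by
  have hlin : f.linear ^ k = 1 := by
    rw [← AffineMap.linearHom_apply, ← map_pow, hf, map_one]
  have hdet : |LinearMap.det f.linear| = 1 := by
    rw [← pow_eq_one_iff_of_nonneg (abs_nonneg _) hk, ← abs_pow, ← map_pow, hlin, map_one,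
      abs_one]
  have hlin_mp : MeasurePreserving f.linear volume volume := by
    refine ⟨f.linear.continuous_of_finiteDimensional.measurable, ?_⟩
    rw [Real.map_linearMap_volume_pi_eq_smul_volume_pi (by simp [← abs_ne_zero, hdet]),
      abs_inv, hdet, inv_one, ENNReal.ofReal_one, one_smul]
  have hdecomp : ⇑f = (· + f 0) ∘ f.linear := by
    funext x; exact congrFun f.decomp x
  rw [hdecomp]
  exact (measurePreserving_add_right volume (f 0)).comp hlin_mp

theorem AffineMap.setIntegral_comp_of_pow_eq_one {ι E : Type*} [Fintype ι]
    [NormedAddCommGroup E] [NormedSpace ℝ E]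
    (f : (ι → ℝ) →ᵃ[ℝ] (ι → ℝ)) {k : ℕ} (hk : k ≠ 0) (hf : f ^ k = 1)
    {s : Set (ι → ℝ)} (hs : f ⁻¹' s = s) (g : (ι → ℝ) → E) :
    ∫ x in s, g (f x) = ∫ x in s, g x := by
  have hinv : Function.LeftInverse ⇑(f ^ (k - 1)) f := fun x => by
    change (f ^ (k - 1) * f) x = x
    rw [← pow_succ, Nat.sub_add_cancel (Nat.one_le_iff_ne_zero.2 hk), hf,
      AffineMap.coe_one, id_eq]
  have hemb := f.continuous_of_finiteDimensional.measurableEmbedding hinv.injective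
  simpa only [hs] using (f.measurePreserving_of_pow_eq_one hk hf).setIntegral_preimage_emb hemb g s

theorem harmC_succ {n : ℕ} (hn : 1 ≤ n) : harmC (n + 1) = harmC n + 1 / (n + 1) := by
  rw [harmC, sum_Icc_succ_top (by omega : 2 ≤ n + 1), ← harmC]
  push_cast
  ring

theorem integral_pow_mul_log (k : ℕ) (a : ℝ) :
    ∫ u in 0..a, u ^ k * log u = a ^ (k + 1) * log a / (k + 1) - a ^ (k + 1) / (k + 1) ^ 2 := by
  have hk : (k : ℝ) + 1 ≠ 0 := by positivity
  have hcont : Continuous fun u : ℝ =>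
      u ^ (k + 1) * log u / (k + 1) - u ^ (k + 1) / (k + 1) ^ 2 := by
    simp_rw [pow_succ, mul_assoc]
    fun_prop
  rw [intervalIntegral.integral_eq_sub_of_hasDeriv_right hcont.continuousOn (fun u hu => ?_)
    (intervalIntegral.intervalIntegrable_log'.continuousOn_mul (continuous_pow k).continuousOn)]
  · simp
  · have hu0 : u ≠ 0 := by
      rintro rfl
      simp only [Set.mem_Ioo, min_lt_iff, lt_max_iff, lt_self_iff_false, false_or] at hu
      linarith [hu.1, hu.2]
    have h := (((hasDerivAt_pow (k + 1) u).mul (hasDerivAt_log hu0)).div_const ((k : ℝ) + 1)).sub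
      ((hasDerivAt_pow (k + 1) u).div_const (((k : ℝ) + 1) ^ 2))
    refine (h.congr_deriv ?_).hasDerivWithinAt
    field_simp
    push_cast
    ring

def cornerSimplex (m : ℕ) (a : ℝ) : Set (Fin m → ℝ) :=
  {y | (∀ i, 0 ≤ y i) ∧ ∑ i, y i ≤ a}

theorem isClosed_cornerSimplex (m : ℕ) (a : ℝ) : IsClosed (cornerSimplex m a) := by
  have h : cornerSimplex m a = (⋂ i, {y | 0 ≤ y i}) ∩ {y | ∑ i, y i ≤ a} := by
    ext; simp [cornerSimplex]
  rw [h]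
  exact (isClosed_iInter fun i => isClosed_le continuous_const (continuous_apply i)).inter
    (isClosed_le (continuous_finsetSum _ fun i _ => continuous_apply i) continuous_const)

theorem isCompact_cornerSimplex (m : ℕ) (a : ℝ) : IsCompact (cornerSimplex m a) := by
  refine (isCompact_Icc (a := 0) (b := fun _ => a)).of_isClosed_subset
    (isClosed_cornerSimplex m a) fun y hy => ⟨hy.1, fun i => ?_⟩
  exact (single_le_sum (fun j _ => hy.1 j) (mem_univ i)).trans hy.2

theorem measurableSet_cornerSimplex (m : ℕ) (a : ℝ) : MeasurableSet (cornerSimplex m a) :=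
  (isClosed_cornerSimplex m a).measurableSet

theorem nonneg_of_mem_cornerSimplex {m : ℕ} {a : ℝ} {z : Fin m → ℝ}
    (hz : z ∈ cornerSimplex m a) : 0 ≤ a :=
  (sum_nonneg fun i _ => hz.1 i).trans hz.2

theorem cons_mem_cornerSimplex_iff {m : ℕ} {a x : ℝ} {z : Fin m → ℝ} :
    Fin.cons x z ∈ cornerSimplex (m + 1) a ↔ 0 ≤ x ∧ z ∈ cornerSimplex m (a - x) := by
  simp only [cornerSimplex, Set.mem_ofPred_eq, Fin.forall_fin_succ, Fin.cons_zero,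
    Fin.cons_succ, Fin.sum_univ_succ, le_sub_iff_add_le']
  tauto

theorem setIntegral_cornerSimplex_succ {m : ℕ} {a : ℝ} {F : (Fin (m + 1) → ℝ) → ℝ}
    (hF : IntegrableOn F (cornerSimplex (m + 1) a)) :
    ∫ y in cornerSimplex (m + 1) a, F y =
      ∫ x in Set.Icc 0 a, ∫ z in cornerSimplex m (a - x), F (Fin.cons x z) := by
  set e := (MeasurableEquiv.piFinSuccAbove (fun _ : Fin (m + 1) => ℝ) 0).symm
  have he : MeasurePreserving e := (volume_preserving_piFinSuccAbove _ 0).symm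
  have hemb := e.measurableEmbedding
  have hcons : ∀ p, e p = Fin.cons p.1 p.2 := fun p => Fin.insertNth_zero' p.1 p.2
  have hslice : ∀ x, ∫ z, (cornerSimplex (m + 1) a).indicator F (Fin.cons x z) =
      (Set.Icc 0 a).indicator (fun x => ∫ z in cornerSimplex m (a - x), F (Fin.cons x z)) x := by
    intro x
    by_cases hx : x ∈ Set.Icc 0 a
    · rw [Set.indicator_of_mem hx, ← integral_indicator (measurableSet_cornerSimplex _ _)]
      congr 1 with z
      classical
      simp only [Set.indicator_apply, cons_mem_cornerSimplex_iff, hx.1, true_and]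
    · rw [Set.indicator_of_notMem hx, ← integral_zero (Fin m → ℝ) ℝ]
      refine integral_congr_ae (.of_forall fun z => Set.indicator_of_notMem (fun hz => hx ?_) _)
      obtain ⟨hx0, hz⟩ := cons_mem_cornerSimplex_iff.1 hz
      exact ⟨hx0, sub_nonneg.1 (nonneg_of_mem_cornerSimplex hz)⟩
  rw [← integral_indicator (measurableSet_cornerSimplex _ _), ← he.integral_comp hemb,
    Measure.volume_eq_prod, integral_prod (fun p => (cornerSimplex (m + 1) a).indicator F (e p))
      ((he.integrable_comp_emb hemb).2 (hF.integrable_indicator (measurableSet_cornerSimplex _ _))),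
    ← integral_indicator measurableSet_Icc]
  simp only [hcons, hslice]

theorem setIntegral_cornerSimplex_mul_log (m : ℕ) {a : ℝ} (ha : 0 ≤ a) :
    ∫ y in cornerSimplex m a, (a - ∑ i, y i) * log (a - ∑ i, y i) =
      a ^ (m + 1) / (m + 1)! * (log a - harmC (m + 1)) := by
  induction m generalizing a with
  | zero =>
    have huniv : cornerSimplex 0 a = Set.univ := by
      ext y; simp [cornerSimplex, ha]
    simp [huniv, harmC, Measure.volume_pi_eq_dirac 0]
  | succ m ih =>
    have hslice : ∀ x ∈ Set.Icc 0 a,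
        ∫ z in cornerSimplex m (a - x),
            (a - ∑ i, Fin.cons x z i) * log (a - ∑ i, Fin.cons x z i) =
          (a - x) ^ (m + 1) / (m + 1)! * (log (a - x) - harmC (m + 1)) := fun x hx => by
      simpa only [Fin.sum_univ_succ, Fin.cons_zero, Fin.cons_succ, sub_add_eq_sub_sub]
        using ih (sub_nonneg.2 hx.2)
    have hint : IntegrableOn
        (fun y : Fin (m + 1) → ℝ => (a - ∑ i, y i) * log (a - ∑ i, y i))
        (cornerSimplex (m + 1) a) :=
      (by fun_prop : Continuous _).continuousOn.integrableOn_compact (isCompact_cornerSimplex _ _)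
    rw [setIntegral_cornerSimplex_succ hint, setIntegral_congr_fun measurableSet_Icc hslice,
      integral_Icc_eq_integral_Ioc, ← intervalIntegral.integral_of_le ha,
      intervalIntegral.integral_comp_sub_left
        (fun u => u ^ (m + 1) / (m + 1)! * (log u - harmC (m + 1))) a, sub_self, sub_zero]
    have hsplit : (fun u : ℝ => u ^ (m + 1) / (m + 1)! * (log u - harmC (m + 1))) =
        fun u => (u ^ (m + 1) * log u - harmC (m + 1) * u ^ (m + 1)) / (m + 1)! := by
      ext u; ring
    rw [hsplit, intervalIntegral.integral_div, intervalIntegral.integral_sub,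
      intervalIntegral.integral_const_mul, integral_pow, integral_pow_mul_log,
      harmC_succ (n := m + 1) (by omega), Nat.factorial_succ (m + 1)]
    · push_cast
      field_simp
      ring
    · exact intervalIntegral.intervalIntegrable_log'.continuousOn_mul
        (continuous_pow _).continuousOn
    · exact (continuous_const.mul (continuous_pow _)).intervalIntegrable _ _

def simplexPoint (m : ℕ) : (Fin m → ℝ) →ᵃ[ℝ] (Fin (m + 1) → ℝ) where
  toFun y i := if h : (i : ℕ) < m then y ⟨i, h⟩ else 1 - ∑ j, y j
  linear :=
    { toFun := fun v i => if h : (i : ℕ) < m then v ⟨i, h⟩ else -∑ j, v j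
      map_add' := fun v w => by
        ext i; split_ifs <;> simp [sum_add_distrib, *]; ring
      map_smul' := fun c v => by
        ext i; split_ifs <;> simp [mul_sum, *] }
  map_vadd' y v := by
    ext i; split_ifs <;> simp [sum_add_distrib, *]; ring

def SimplexIntegrable (m : ℕ) (f : (Fin (m + 1) → ℝ) → ℝ) : Prop :=
  IntegrableOn (fun y => f (simplexPoint m y)) (cornerSimplex m 1)

section Simplex

variable {m : ℕ}

theorem simplexIntegral_succ (f : (Fin (m + 1) → ℝ) → ℝ) :
    simplexIntegral (m + 1) f = m ! * ∫ y in cornerSimplex m 1, f (simplexPoint m y) :=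
  rfl

@[simp]
theorem simplexPoint_castSucc (y : Fin m → ℝ) (k : Fin m) :
    simplexPoint m y k.castSucc = y k := by
  simp [simplexPoint]

@[simp]
theorem simplexPoint_last (y : Fin m → ℝ) : simplexPoint m y (Fin.last m) = 1 - ∑ j, y j := by
  simp [simplexPoint]

theorem sum_simplexPoint (y : Fin m → ℝ) : ∑ i, simplexPoint m y i = 1 := by
  simp [Fin.sum_univ_castSucc]

theorem simplexPoint_init {x : Fin (m + 1) → ℝ} (hx : ∑ i, x i = 1) :
    simplexPoint m (Fin.init x) = x := by
  ext i
  induction i using Fin.lastCases with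
  | last => rw [Fin.sum_univ_castSucc] at hx; simp [Fin.init, ← hx]
  | cast k => simp [Fin.init]

theorem mem_cornerSimplex_one_iff {y : Fin m → ℝ} :
    y ∈ cornerSimplex m 1 ↔ simplexPoint m y ∈ stdSimplex ℝ (Fin (m + 1)) := by
  simp [cornerSimplex, stdSimplex, sum_simplexPoint, Fin.forall_fin_succ']

def permCoords (σ : Equiv.Perm (Fin (m + 1))) : (Fin m → ℝ) →ᵃ[ℝ] (Fin m → ℝ) :=
  (LinearMap.funLeft ℝ ℝ Fin.castSucc).toAffineMap.comp
    ((LinearMap.funLeft ℝ ℝ σ).toAffineMap.comp (simplexPoint m))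

theorem permCoords_apply (σ : Equiv.Perm (Fin (m + 1))) (y : Fin m → ℝ) (k : Fin m) :
    permCoords σ y k = simplexPoint m y (σ k.castSucc) :=
  rfl

theorem simplexPoint_permCoords (σ : Equiv.Perm (Fin (m + 1))) (y : Fin m → ℝ) :
    simplexPoint m (permCoords σ y) = simplexPoint m y ∘ σ :=
  simplexPoint_init (x := simplexPoint m y ∘ σ) (by
    simp only [Function.comp_apply, Equiv.sum_comp, sum_simplexPoint])

theorem permCoords_mul (σ τ : Equiv.Perm (Fin (m + 1))) :
    permCoords σ * permCoords τ = permCoords (τ * σ) := by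
  ext y k
  simp [permCoords_apply, simplexPoint_permCoords]

theorem permCoords_one : permCoords (1 : Equiv.Perm (Fin (m + 1))) = 1 := by
  ext y k
  simp [permCoords_apply]

theorem permCoords_pow (σ : Equiv.Perm (Fin (m + 1))) (k : ℕ) :
    permCoords σ ^ k = permCoords (σ ^ k) := by
  induction k with
  | zero => rw [pow_zero, pow_zero, permCoords_one]
  | succ k ih => rw [pow_succ', ih, permCoords_mul, pow_succ]

theorem preimage_permCoords (σ : Equiv.Perm (Fin (m + 1))) :
    permCoords σ ⁻¹' cornerSimplex m 1 = cornerSimplex m 1 := by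
  ext y
  simp only [Set.mem_preimage, mem_cornerSimplex_one_iff, simplexPoint_permCoords, stdSimplex,
    Set.mem_ofPred_eq, Function.comp_apply, Equiv.sum_comp]
  rw [σ.forall_congr_left]
  simp

theorem simplexIntegral_comp_perm (σ : Equiv.Perm (Fin (m + 1)))
    (f : (Fin (m + 1) → ℝ) → ℝ) :
    simplexIntegral (m + 1) (fun x => f (x ∘ σ)) = simplexIntegral (m + 1) f := by
  have hσ : permCoords σ ^ orderOf σ = 1 := by
    rw [permCoords_pow, pow_orderOf_eq_one, permCoords_one]
  simp only [simplexIntegral_succ, ← simplexPoint_permCoords,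
    (permCoords σ).setIntegral_comp_of_pow_eq_one (orderOf_pos σ).ne' hσ (preimage_permCoords σ)
      fun y => f (simplexPoint m y)]

theorem SimplexIntegrable.of_continuous {f : (Fin (m + 1) → ℝ) → ℝ} (hf : Continuous f) :
    SimplexIntegrable m f :=
  (hf.comp (simplexPoint m).continuous_of_finiteDimensional).continuousOn.integrableOn_compact
    (isCompact_cornerSimplex m 1)

theorem SimplexIntegrable.of_bound {f : (Fin (m + 1) → ℝ) → ℝ} (hf : Measurable f) (C : ℝ)
    (hC : ∀ x ∈ stdSimplex ℝ (Fin (m + 1)), |f x| ≤ C) : SimplexIntegrable m f :=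
  Measure.integrableOn_of_bounded (isCompact_cornerSimplex m 1).measure_lt_top.ne
    (hf.comp (simplexPoint m).continuous_of_finiteDimensional.measurable).aestronglyMeasurable
    (ae_restrict_of_forall_mem (measurableSet_cornerSimplex m 1) fun _ hy =>
      hC _ (mem_cornerSimplex_one_iff.1 hy))

theorem simplexIntegral_congr {f g : (Fin (m + 1) → ℝ) → ℝ}
    (h : ∀ x ∈ stdSimplex ℝ (Fin (m + 1)), f x = g x) :
    simplexIntegral (m + 1) f = simplexIntegral (m + 1) g := by
  rw [simplexIntegral_succ, simplexIntegral_succ,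
    setIntegral_congr_fun (measurableSet_cornerSimplex m 1)
      fun y hy => h _ (mem_cornerSimplex_one_iff.1 hy)]

theorem simplexIntegral_const_mul (c : ℝ) (f : (Fin (m + 1) → ℝ) → ℝ) :
    simplexIntegral (m + 1) (fun x => c * f x) = c * simplexIntegral (m + 1) f := by
  rw [simplexIntegral_succ, simplexIntegral_succ, integral_const_mul]
  ring

theorem simplexIntegral_neg (f : (Fin (m + 1) → ℝ) → ℝ) :
    simplexIntegral (m + 1) (fun x => -f x) = -simplexIntegral (m + 1) f := by
  rw [simplexIntegral_succ, simplexIntegral_succ, integral_neg, mul_neg]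

theorem simplexIntegral_sub {f g : (Fin (m + 1) → ℝ) → ℝ} (hf : SimplexIntegrable m f)
    (hg : SimplexIntegrable m g) :
    simplexIntegral (m + 1) (fun x => f x - g x) =
      simplexIntegral (m + 1) f - simplexIntegral (m + 1) g := by
  rw [simplexIntegral_succ, simplexIntegral_succ, simplexIntegral_succ, integral_sub hf hg,
    mul_sub]

theorem simplexIntegral_finset_sum {ι : Type*} (s : Finset ι)
    {f : ι → (Fin (m + 1) → ℝ) → ℝ} (hf : ∀ i ∈ s, SimplexIntegrable m (f i)) :
    simplexIntegral (m + 1) (fun x => ∑ i ∈ s, f i x) =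
      ∑ i ∈ s, simplexIntegral (m + 1) (f i) := by
  simp only [simplexIntegral_succ, integral_finsetSum s hf, mul_sum]

theorem simplexIntegral_mul_log_apply (i : Fin (m + 1)) :
    simplexIntegral (m + 1) (fun x => x i * log (x i)) = -harmC (m + 1) / (m + 1) := by
  have h := simplexIntegral_comp_perm (Equiv.swap (Fin.last m) i)
    fun x => x (Fin.last m) * log (x (Fin.last m))
  simp only [Function.comp_apply, Equiv.swap_apply_left] at h
  rw [h, simplexIntegral_succ]
  simp only [simplexPoint_last]
  rw [setIntegral_cornerSimplex_mul_log m zero_le_one, Nat.factorial_succ]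
  push_cast
  field_simp
  simp

theorem simplexIntegral_sum_mul_log :
    simplexIntegral (m + 1) (fun x => ∑ i, x i * log (x i)) = -harmC (m + 1) := by
  rw [simplexIntegral_finset_sum (f := fun i x => x i * log (x i)) _ fun i _ =>
    .of_continuous (continuous_mul_log.comp (continuous_apply i))]
  simp only [simplexIntegral_mul_log_apply, sum_const, card_univ, Fintype.card_fin, nsmul_eq_mul]
  push_cast
  field_simp

theorem simplexIntegral_comp_conv (g : ℝ → ℝ) (p : Fin (m + 1) → ℝ) (j : Fin (m + 1)) :
    simplexIntegral (m + 1) (fun x => g (∑ k, x (j - k) * p k)) =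
      simplexIntegral (m + 1) (fun x => g (∑ k, p k * x k)) := by
  simpa only [Function.comp_apply, Equiv.subLeft_apply, mul_comm]
    using simplexIntegral_comp_perm (Equiv.subLeft j) fun x => g (∑ k, p k * x k)

end Simplex

theorem mul_mul_log_div_eq {a d L : ℝ} (ha : 0 ≤ a) (hd : 0 ≤ d) (hL : a * d ≤ L) :
    a * (d * log (d / L)) = a * (d * log d) - a * d * log L := by
  rcases ha.eq_or_lt with rfl | ha
  · simp
  rcases hd.eq_or_lt with rfl | hd
  · simp
  rw [log_div hd.ne' (mul_pos ha hd |>.trans_le hL).ne']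
  ring

theorem abs_mul_mul_log_div_le {a d L : ℝ} (ha₀ : 0 ≤ a) (ha₁ : a ≤ 1) (hd₀ : 0 ≤ d)
    (hd₁ : d ≤ 1) (hL : a * d ≤ L) (hL₁ : L ≤ 1) : |a * (d * log (d / L))| ≤ 2 := by
  have hd : |d * log d| ≤ 1 := by
    rcases hd₀.eq_or_lt with rfl | hd₀
    · simp
    · simpa only [mul_comm] using (abs_log_mul_self_lt d hd₀ hd₁).le
  have hlogL : |a * d * log L| ≤ 1 := by
    rcases (mul_nonneg ha₀ hd₀).eq_or_lt with had | had
    · simp [← had]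
    have hL₀ := had.trans_le hL
    have hlog : log L ≤ 0 := log_nonpos hL₀.le hL₁
    calc |a * d * log L| = a * d * -log L := by
          rw [abs_mul, abs_of_pos had, abs_of_nonpos hlog]
      _ ≤ L * -log L := mul_le_mul_of_nonneg_right hL (neg_nonneg.2 hlog)
      _ ≤ 1 := by
          have := (abs_log_mul_self_lt L hL₀ hL₁).le
          rw [abs_le] at this
          linarith
  rw [mul_mul_log_div_eq ha₀ hd₀ hL]
  calc |a * (d * log d) - a * d * log L| ≤ |a * (d * log d)| + |a * d * log L| := abs_sub _ _
    _ ≤ 1 + 1 := by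
        gcongr
        rw [abs_mul, abs_of_nonneg ha₀]
        exact mul_le_one₀ ha₁ (abs_nonneg _) hd
    _ = 2 := by norm_num

section Cyclic

variable {G : Type*} [AddGroup G] [Fintype G] {p t : G → ℝ}

theorem le_sum_sub_mul (hp : ∀ i, 0 ≤ p i) (ht : ∀ j, 0 ≤ t j) (i j : G) :
    p i * t (j - i) ≤ ∑ k, t (j - k) * p k :=
  mul_comm (p i) _ ▸ single_le_sum (fun k _ => mul_nonneg (ht _) (hp k)) (mem_univ i)

theorem sum_sub_mul_le_one (hp : ∀ i, 0 ≤ p i) (hps : ∑ i, p i = 1) (ht₁ : ∀ j, t j ≤ 1)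
    (j : G) : ∑ k, t (j - k) * p k ≤ 1 :=
  hps ▸ sum_le_sum fun k _ => mul_le_of_le_one_left (hp k) (ht₁ _)

theorem sum_mul_sum_mul_log_div (hp : ∀ i, 0 ≤ p i) (hps : ∑ i, p i = 1)
    (ht : ∀ j, 0 ≤ t j) :
    ∑ i, p i * ∑ j, t (j - i) * log (t (j - i) / ∑ k, t (j - k) * p k) =
      ∑ j, t j * log (t j) -
        ∑ j, (∑ k, t (j - k) * p k) * log (∑ k, t (j - k) * p k) := by
  have hshift (i : G) : ∑ j, t (j - i) * log (t (j - i)) = ∑ j, t j * log (t j) :=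
    Equiv.sum_comp (Equiv.subRight i) fun j => t j * log (t j)
  simp only [mul_sum, mul_mul_log_div_eq (hp _) (ht _) (le_sum_sub_mul hp ht _ _), sum_sub_distrib]
  congr 1
  · simp only [← mul_sum, hshift, ← sum_mul, hps, one_mul]
  · rw [sum_comm]
    simp only [← sum_mul, mul_comm (p _)]

theorem abs_mul_sum_mul_log_div_le (hp : ∀ i, 0 ≤ p i) (hps : ∑ i, p i = 1)
    (ht : ∀ j, 0 ≤ t j) (ht₁ : ∀ j, t j ≤ 1) (i : G) :
    |p i * ∑ j, t (j - i) * log (t (j - i) / ∑ k, t (j - k) * p k)| ≤ 2 * Fintype.card G := by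
  have hp₁ : p i ≤ 1 := hps ▸ single_le_sum (fun k _ => hp k) (mem_univ i)
  rw [mul_sum]
  refine (abs_sum_le_sum_abs _ _).trans ?_
  simpa [mul_comm] using sum_le_sum fun j (_ : j ∈ univ) => abs_mul_mul_log_div_le (hp i) hp₁
    (ht _) (ht₁ _) (le_sum_sub_mul hp ht i j) (sum_sub_mul_le_one hp hps ht₁ j)

end Cyclic

theorem simplexIntegrable_mul_sum_mul_log_div {m : ℕ} {p : Fin (m + 1) → ℝ}
    (hp : ∀ i, 0 ≤ p i) (hps : ∑ i, p i = 1) (i : Fin (m + 1)) :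
    SimplexIntegrable m fun t =>
      p i * ∑ j, t (j - i) * log (t (j - i) / ∑ k, t (j - k) * p k) :=
  .of_bound (by fun_prop) _ fun t ht => by
    simpa using abs_mul_sum_mul_log_div_le hp hps ht.1
      (fun j => ht.2 ▸ single_le_sum (fun k _ => ht.1 k) (mem_univ j)) i

theorem classical_subentropy_operational_general (n : ℕ) (p : Fin n → ℝ)
    (hp : ∀ i, 0 ≤ p i) (hps : ∑ i, p i = 1) :
    ∑ i, p i * simplexIntegral n (fun t =>
        ∑ j, t (j - i) * Real.log (t (j - i) / ∑ k, t (j - k) * p k))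
      = subF n p := by
  obtain _ | m := n
  · simp at hps
  have hconv : ∀ j, SimplexIntegrable m fun t =>
      (∑ k, t (j - k) * p k) * log (∑ k, t (j - k) * p k) := fun j =>
    .of_continuous (continuous_mul_log.comp (by fun_prop))
  calc ∑ i, p i * simplexIntegral (m + 1) (fun t =>
        ∑ j, t (j - i) * log (t (j - i) / ∑ k, t (j - k) * p k))
      = simplexIntegral (m + 1) (fun t =>
          ∑ i, p i * ∑ j, t (j - i) * log (t (j - i) / ∑ k, t (j - k) * p k)) := by
        rw [simplexIntegral_finset_sum _ fun i _ => simplexIntegrable_mul_sum_mul_log_div hp hps i]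
        simp only [simplexIntegral_const_mul]
    _ = simplexIntegral (m + 1) (fun t => ∑ j, t j * log (t j) -
          ∑ j, (∑ k, t (j - k) * p k) * log (∑ k, t (j - k) * p k)) :=
        simplexIntegral_congr fun t ht => sum_mul_sum_mul_log_div hp hps ht.1
    _ = -harmC (m + 1) - (m + 1) * simplexIntegral (m + 1) (fun x =>
          (∑ k, p k * x k) * log (∑ k, p k * x k)) := by
        rw [simplexIntegral_sub (.of_continuous (by fun_prop)) (.of_continuous (by fun_prop)),
          simplexIntegral_sum_mul_log, simplexIntegral_finset_sum _ fun j _ => hconv j]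
        simp [simplexIntegral_comp_conv (fun y => y * log y)]
    _ = subF (m + 1) p := by
        simp only [subF, eta, simplexIntegral_neg]
        push_cast
        ring

/-- operational formula for classical subentropy: the uniform average over
cyclic stochastic maps of the mean Kullback–Leibler divergence Σ_i p_i D(Λ_t(δ_i) ‖ Λ_t(p))
equals the subentropy F(p). -/
theorem classical_subentropy_operational (n : ℕ) (hn : 1 ≤ n) (p : Fin n → ℝ)
    (hp : ∀ i, 0 ≤ p i) (hps : ∑ i, p i = 1) :
    ∑ i, p i * simplexIntegral n (fun t =>
        ∑ j, t (j - i) * Real.log (t (j - i) / ∑ k, t (j - k) * p k))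
      = subF n p :=
  classical_subentropy_operational_general n p hp hps
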